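/- Let T be a DFS spanning tree of a finite connected graph G rooted at r. For a non-root vertex v, the parent edge of v is a bridge of G if and only if every non-tree edge with one endpoint a descendant of v has its other endpoint also a descendant of v. -/

import Mathlib

/-- `u` is an ancestor of `v` in the spanning tree `T` rooted at `r`. -/
def SimpleGraph.IsAncestor {V : Type*} (T : SimpleGraph V) (r u v : V) : Prop :=
  ∀ p : T.Walk r v, p.IsPath → u ∈ p.support

namespace SimpleGraph

open Walk

variable {V : Type*} {T : SimpleGraph V} {r : V}

private lemma tree_path_unique (hT : T.IsTree) {a b : V} {q q' : T.Walk a b}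
    (hq : q.IsPath) (hq' : q'.IsPath) : q = q' :=
  (hT.existsUnique_path a b).unique hq hq'

private lemma anc_iff (hT : T.IsTree) {u w : V} (q : T.Walk r w) (hq : q.IsPath) :
    T.IsAncestor r u w ↔ u ∈ q.support := by
  constructor
  · exact fun h => h q hq
  · intro h p hp
    rwa [tree_path_unique hT hp hq]

private lemma anc_refl (u : V) : T.IsAncestor r u u := fun p _ => p.end_mem_support

private lemma anc_trans (hT : T.IsTree) {a b c : V} (h1 : T.IsAncestor r a b)
    (h2 : T.IsAncestor r b c) : T.IsAncestor r a c := by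
  classical
  intro q hq
  have hb : b ∈ q.support := h2 q hq
  exact q.support_takeUntil_subset hb (h1 (q.takeUntil b hb) (hq.takeUntil hb))

private lemma split_eq [DecidableEq V] {G : SimpleGraph V} {s t u : V} {q : G.Walk s t}
    (hq : q.IsPath) (h : u ∈ q.support) {x : V}
    (h1 : x ∈ (q.takeUntil u h).support) (h2 : x ∈ (q.dropUntil u h).support) : x = u := by
  by_contra hxu
  have hnd : ((q.takeUntil u h).support ++ (q.dropUntil u h).support.tail).Nodup := by
    rw [← support_append, take_spec]
    exact hq.support_nodup
  have hx2 : x ∈ (q.dropUntil u h).support.tail := by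
    have := (q.dropUntil u h).support_eq_cons
    rw [this, List.mem_cons] at h2
    tauto
  exact (List.disjoint_left.mp (List.nodup_append'.mp hnd).2.2) h1 hx2

private lemma anc_antisymm (hT : T.IsTree) {a b : V} (h1 : T.IsAncestor r a b)
    (h2 : T.IsAncestor r b a) : a = b := by
  classical
  obtain ⟨q, hq, -⟩ := hT.existsUnique_path r b
  have ha : a ∈ q.support := h1 q hq
  have hb : b ∈ (q.takeUntil a ha).support := h2 _ (hq.takeUntil ha)
  exact (split_eq hq ha hb (q.dropUntil a ha).end_mem_support).symm

private lemma takeUntil_cons' [DecidableEq V] {G : SimpleGraph V} {u c w a : V} (h : G.Adj u c)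
    (q : G.Walk c w) (hm : a ∈ (cons h q).support) (hu : u ≠ a) (ha : a ∈ q.support) :
    (cons h q).takeUntil a hm = cons h (q.takeUntil a ha) := by
  simp [Walk.takeUntil, hu]

private lemma takeUntil_support_total [DecidableEq V] {G : SimpleGraph V} :
    ∀ {s w : V} (q : G.Walk s w) {a b : V} (ha : a ∈ q.support) (hb : b ∈ q.support),
      b ∈ (q.takeUntil a ha).support ∨ a ∈ (q.takeUntil b hb).support := by
  intro s w q
  induction q with
  | nil =>
    intro a b ha hb
    rw [mem_support_nil_iff] at ha hb
    subst ha; subst hb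
    exact Or.inl (start_mem_support _)
  | @cons s c w h q ih =>
    intro a b ha hb
    by_cases hsa : s = a
    · subst hsa
      exact Or.inr (start_mem_support _)
    by_cases hsb : s = b
    · subst hsb
      exact Or.inl (start_mem_support _)
    have ha' : a ∈ q.support := by
      have := ha; rw [support_cons, List.mem_cons] at this; tauto
    have hb' : b ∈ q.support := by
      have := hb; rw [support_cons, List.mem_cons] at this; tauto
    rcases ih ha' hb' with h1 | h1
    · left
      rw [takeUntil_cons' h q ha hsa ha', support_cons]
      exact List.mem_cons_of_mem _ h1
    · right
      rw [takeUntil_cons' h q hb hsb hb', support_cons]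
      exact List.mem_cons_of_mem _ h1

private lemma anc_total (hT : T.IsTree) {a b w : V} (h1 : T.IsAncestor r a w)
    (h2 : T.IsAncestor r b w) : T.IsAncestor r a b ∨ T.IsAncestor r b a := by
  classical
  obtain ⟨q, hq, -⟩ := hT.existsUnique_path r w
  have ha := h1 q hq
  have hb := h2 q hq
  rcases takeUntil_support_total q ha hb with h | h
  · exact Or.inr ((anc_iff hT _ (hq.takeUntil ha)).2 h)
  · exact Or.inl ((anc_iff hT _ (hq.takeUntil hb)).2 h)

private lemma concat_isPath {G : SimpleGraph V} {a b c : V} {q : G.Walk a b} (hq : q.IsPath)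
    (h : G.Adj b c) (hc : c ∉ q.support) : (q.concat h).IsPath := by
  rw [← isPath_reverse_iff, reverse_concat]
  exact hq.reverse.cons (by simpa using hc)

private lemma adj_anc_or (hT : T.IsTree) {a b : V} (hab : T.Adj a b) :
    T.IsAncestor r a b ∨ T.IsAncestor r b a := by
  by_contra hcon
  push_neg at hcon
  obtain ⟨h1, h2⟩ := hcon
  rw [IsAncestor] at h1 h2
  push_neg at h1 h2
  obtain ⟨q, hq, hna⟩ := h1
  obtain ⟨q', hq', hnb⟩ := h2
  have hcp : (q'.concat hab).IsPath := concat_isPath hq' hab hnb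
  have heq := tree_path_unique hT hcp hq
  apply hna
  rw [← heq, support_concat]
  simp [q'.end_mem_support]

private lemma path_to_child (hT : T.IsTree) {a b : V} (hab : T.Adj a b)
    (hanc : T.IsAncestor r a b) {q : T.Walk r b} (hq : q.IsPath) :
    ∃ q' : T.Walk r a, q'.IsPath ∧ q = q'.concat hab := by
  obtain ⟨q', hq', -⟩ := hT.existsUnique_path r a
  have hb : b ∉ q'.support := by
    intro hb
    exact hab.ne (anc_antisymm hT hanc ((anc_iff hT q' hq').2 hb))
  exact ⟨q', hq', tree_path_unique hT hq (concat_isPath hq' hab hb)⟩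

private lemma parent_unique (hT : T.IsTree) {b1 b2 c : V} (h1 : T.Adj b1 c) (h2 : T.Adj b2 c)
    (ha1 : T.IsAncestor r b1 c) (ha2 : T.IsAncestor r b2 c) : b1 = b2 := by
  obtain ⟨q, hq, -⟩ := hT.existsUnique_path r c
  obtain ⟨q1, hq1, e1⟩ := path_to_child hT h1 ha1 hq
  obtain ⟨q2, hq2, e2⟩ := path_to_child hT h2 ha2 hq
  have heq : (q1.concat h1).reverse = (q2.concat h2).reverse := by rw [← e1, ← e2]
  rw [reverse_concat, reverse_concat] at heq
  have hs := congrArg Walk.support heq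
  rw [support_cons, support_cons, q1.reverse.support_eq_cons, q2.reverse.support_eq_cons] at hs
  exact (List.cons.injEq _ _ _ _ ▸ hs : _ ∧ _).2 |> fun h => (List.cons.injEq _ _ _ _ ▸ h : _ ∧ _).1

private lemma tree_cross (hT : T.IsTree) {v p x y : V} (hpv : T.Adj p v)
    (hancp : T.IsAncestor r p v) (hxy : T.Adj x y) (hvx : T.IsAncestor r v x)
    (hvy : ¬ T.IsAncestor r v y) : x = v ∧ y = p := by
  rcases adj_anc_or hT hxy with h | h
  · exact absurd (anc_trans hT hvx h) hvy
  · obtain ⟨q, hq, -⟩ := hT.existsUnique_path r x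
    obtain ⟨qy, hqy, he⟩ := path_to_child hT hxy.symm h hq
    have hvq : v ∈ q.support := hvx q hq
    rw [he, support_concat, List.mem_append,
      List.mem_singleton] at hvq
    rcases hvq with hv1 | hv2
    · exact absurd ((anc_iff hT qy hqy).2 hv1) hvy
    · subst hv2
      exact ⟨rfl, parent_unique hT hxy.symm hpv h hancp⟩

private lemma exists_cross {G : SimpleGraph V} {D : V → Prop} {e : Sym2 V} :
    ∀ {a b : V} (W : G.Walk a b), D a → ¬ D b → e ∉ W.edges →
      ∃ x y, G.Adj x y ∧ s(x, y) ≠ e ∧ D x ∧ ¬ D y := by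
  intro a b W
  induction W with
  | nil => intro h1 h2 _; exact absurd h1 h2
  | @cons a c b h q ih =>
    intro h1 h2 he
    rw [edges_cons, List.mem_cons] at he
    push_neg at he
    by_cases hc : D c
    · exact ih hc h2 he.2
    · exact ⟨a, c, h, fun hcon => he.1 hcon.symm, h1, hc⟩

private lemma mem_edges_mapLe {G G' : SimpleGraph V} (h : G ≤ G') {u w : V} (p : G.Walk u w)
    (e : Sym2 V) : e ∈ (p.mapLe h).edges ↔ e ∈ p.edges := by
  simp only [Walk.mapLe, Walk.edges_map, List.mem_map, Hom.coe_ofLE,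
    Sym2.map_id', id]
  constructor
  · rintro ⟨e', he', rfl⟩; exact he'
  · exact fun he => ⟨e, he, rfl⟩

end SimpleGraph

open SimpleGraph SimpleGraph.Walk

theorem parent_edge_bridge_iff_descendants_closed {V : Type*} [Fintype V]
    (G T : SimpleGraph V) (r : V)
    (hG : G.Connected) (hle : T ≤ G) (hT : T.IsTree)
    (hdfs : ∀ x y : V, G.Adj x y →
      T.IsAncestor r x y ∨ T.IsAncestor r y x)
    (v p : V) (hvr : v ≠ r) (hparent : T.Adj p v ∧ T.IsAncestor r p v) :
    G.IsBridge s(p, v) ↔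
      ∀ x y : V, G.Adj x y → ¬ T.Adj x y →
        T.IsAncestor r v x → T.IsAncestor r v y := by
  classical
  obtain ⟨hadj_pv, hanc_pv⟩ := hparent
  have hGpv : G.Adj p v := hle hadj_pv
  constructor
  · intro hbridge x y hxy hnT hvx
    by_contra hvy
    have hyx : T.IsAncestor r y x := by
      rcases hdfs x y hxy with h | h
      · exact absurd (anc_trans hT hvx h) hvy
      · exact h
    have hyv : T.IsAncestor r y v := by
      rcases anc_total hT hvx hyx with h | h
      · exact absurd h hvy
      · exact h
    have hyne : y ≠ v := by
      rintro rfl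
      exact hvy (anc_refl y)
    obtain ⟨qv, hqv, -⟩ := hT.existsUnique_path r v
    obtain ⟨qp, hqp, heqv⟩ := path_to_child hT hadj_pv hanc_pv hqv
    have hy_qp : y ∈ qp.support := by
      have hmem := hyv qv hqv
      rw [heqv, support_concat, List.mem_append,
        List.mem_singleton] at hmem
      rcases hmem with h | h
      · exact h
      · exact absurd h hyne
    have hv_qp : v ∉ qp.support := by
      intro hv
      exact hadj_pv.ne (anc_antisymm hT hanc_pv ((anc_iff hT qp hqp).2 hv))
    obtain ⟨qx, hqx, -⟩ := hT.existsUnique_path r x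
    have hv_qx : v ∈ qx.support := hvx qx hqx
    have hp_W1 : p ∉ (qx.dropUntil v hv_qx).support := by
      intro hp
      have hteq : qx.takeUntil v hv_qx = qv := tree_path_unique hT (hqx.takeUntil _) hqv
      have hpt : p ∈ (qx.takeUntil v hv_qx).support := by
        rw [hteq, heqv, support_concat, List.mem_append]
        exact Or.inl qp.end_mem_support
      exact hadj_pv.ne (split_eq hqx hv_qx hpt hp)
    have he_W1 : s(p, v) ∉ (qx.dropUntil v hv_qx).edges := fun he =>
      hp_W1 ((qx.dropUntil v hv_qx).fst_mem_support_of_mem_edges he)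
    have he_W2 : s(p, v) ∉ (qp.dropUntil y hy_qp).edges := fun he =>
      hv_qp (qp.support_dropUntil_subset hy_qp
        ((qp.dropUntil y hy_qp).snd_mem_support_of_mem_edges he))
    have hxyne : s(x, y) ≠ s(p, v) := by
      intro h
      rw [Sym2.eq_iff] at h
      rcases h with ⟨rfl, rfl⟩ | ⟨rfl, rfl⟩
      · exact hnT hadj_pv
      · exact hnT hadj_pv.symm
    apply isBridge_iff.mp hbridge
    apply reachable_delete_edges_iff_exists_walk.mpr
    refine ⟨(((qx.dropUntil v hv_qx).mapLe hle).append
        (Walk.cons hxy ((qp.dropUntil y hy_qp).mapLe hle))).reverse, ?_⟩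
    rw [edges_reverse, List.mem_reverse, edges_append, edges_cons]
    simp only [List.mem_append, List.mem_cons]
    push_neg
    exact ⟨by rwa [mem_edges_mapLe], fun h => hxyne h.symm, by rwa [mem_edges_mapLe]⟩
  · intro hclosed
    rw [isBridge_iff]
    refine fun hreach => ?_
    obtain ⟨W, hW⟩ := reachable_delete_edges_iff_exists_walk.mp hreach
    have hDv : T.IsAncestor r v v := anc_refl v
    have hDp : ¬ T.IsAncestor r v p := fun h =>
      hadj_pv.ne (anc_antisymm hT hanc_pv h)
    obtain ⟨x, y, hxy, hne, hDx, hDy⟩ :=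
      exists_cross W.reverse hDv hDp (by rwa [edges_reverse, List.mem_reverse])
    by_cases hTxy : T.Adj x y
    · obtain ⟨rfl, rfl⟩ := tree_cross hT hadj_pv hanc_pv hTxy hDx hDy
      exact hne Sym2.eq_swap
    · exact hDy (hclosed x y hxy hTxy hDx)
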